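/- Let A be a symmetric positive semidefinite matrix and A_k its best rank-k approximation in Frobenius norm (obtained by truncating the eigendecomposition to the k largest eigenvalues). Then ‖A − A_k‖_F ≤ tr(A)/√k. -/

import Mathlib

open Matrix Finset

/-!
Since `A - A_k = U diag(μ) Uᵀ` with `μ` the tail eigenvalues `λ_k, λ_{k+1}, …`, orthogonality
of `U` gives `‖A - A_k‖_F² = ∑ μᵢ²` and `tr A = ∑ λᵢ`. Each tail eigenvalue is at most the
average `(λ₀ + ⋯ + λ_{k-1}) / k ≤ tr A / k` of the top `k`, so
`∑ μᵢ² ≤ (tr A / k) ∑ μᵢ ≤ (tr A)² / k`.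
-/

namespace Matrix

variable {m n R : Type*} [Fintype m] [Fintype n] [CommRing R]

theorem sum_sq_eq_trace_mul_transpose (M : Matrix m n R) :
    ∑ i, ∑ j, M i j ^ 2 = (M * Mᵀ).trace := by
  simp [trace, mul_apply, sq]

theorem trace_mul_mul_transpose_of_transpose_mul_self [DecidableEq n] {U : Matrix m n R}
    (hU : Uᵀ * U = 1) (B : Matrix n n R) : (U * B * Uᵀ).trace = B.trace := by
  rw [trace_mul_comm, ← Matrix.mul_assoc, hU, Matrix.one_mul]

theorem sum_sq_mul_mul_transpose_of_transpose_mul_self [DecidableEq n] {U : Matrix m n R}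
    (hU : Uᵀ * U = 1) (B : Matrix n n R) :
    ∑ i, ∑ j, (U * B * Uᵀ) i j ^ 2 = ∑ i, ∑ j, B i j ^ 2 := by
  have hconj : U * B * Uᵀ * (U * B * Uᵀ)ᵀ = U * (B * Bᵀ) * Uᵀ := by
    simp only [transpose_mul, transpose_transpose, Matrix.mul_assoc]
    rw [← Matrix.mul_assoc Uᵀ U, hU, Matrix.one_mul]
  rw [sum_sq_eq_trace_mul_transpose, sum_sq_eq_trace_mul_transpose, hconj,
    trace_mul_mul_transpose_of_transpose_mul_self hU]

theorem sum_sq_diagonal [DecidableEq n] (d : n → R) :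
    ∑ i, ∑ j, diagonal d i j ^ 2 = ∑ i, d i ^ 2 := by
  simp [diagonal_apply, ite_pow]

end Matrix

theorem Antitone.nsmul_le_sum_of_le {M : Type*} [AddCommMonoid M] [PartialOrder M]
    [IsOrderedAddMonoid M] {n : ℕ} {f : Fin n → M} (hf : Antitone f) (h0 : ∀ i, 0 ≤ f i)
    {k : ℕ} {i : Fin n} (hki : k ≤ i) : k • f i ≤ ∑ j, f j := by
  let b : Fin n := ⟨k, hki.trans_lt i.isLt⟩
  calc k • f i = ∑ _j ∈ Iio b, f i := by simp [b, Fin.card_Iio]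
    _ ≤ ∑ j ∈ Iio b, f j := sum_le_sum fun j hj => hf ((mem_Iio.1 hj).le.trans hki)
    _ ≤ ∑ j, f j := sum_le_sum_of_subset_of_nonneg (subset_univ _) fun j _ _ => h0 j

theorem Finset.sum_sq_le_mul_sum {ι R : Type*} [CommSemiring R] [PartialOrder R]
    [IsOrderedRing R] {s : Finset ι} {f : ι → R} {c : R} (h0 : ∀ i ∈ s, 0 ≤ f i)
    (hc : ∀ i ∈ s, f i ≤ c) : ∑ i ∈ s, f i ^ 2 ≤ c * ∑ i ∈ s, f i := by
  rw [mul_sum]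
  exact sum_le_sum fun i hi => by
    rw [sq]; exact mul_le_mul_of_nonneg_right (hc i hi) (h0 i hi)

theorem Antitone.sum_sq_tail_le_sq_sum_div {n k : ℕ} (hk : 1 ≤ k) {f : Fin n → ℝ}
    (hf : Antitone f) (h0 : ∀ i, 0 ≤ f i) :
    ∑ i : Fin n, (if (i : ℕ) < k then 0 else f i) ^ 2 ≤ (∑ i, f i) ^ 2 / k := by
  set t := ∑ i, f i
  have ht0 : 0 ≤ t := sum_nonneg fun i _ => h0 i
  have hk0 : (0 : ℝ) < k := by exact_mod_cast hk
  have htail_le : ∀ i : Fin n, (if (i : ℕ) < k then 0 else f i) ≤ t / k := fun i => by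
    by_cases hi : (i : ℕ) < k
    · simpa [hi] using div_nonneg ht0 hk0.le
    · simpa [hi, le_div_iff₀ hk0, mul_comm, nsmul_eq_mul] using
        hf.nsmul_le_sum_of_le h0 (not_lt.1 hi)
  calc ∑ i : Fin n, (if (i : ℕ) < k then 0 else f i) ^ 2
      ≤ t / k * ∑ i : Fin n, (if (i : ℕ) < k then 0 else f i) :=
        sum_sq_le_mul_sum (fun i _ => by split_ifs <;> simp [h0]) fun i _ => htail_le i
    _ ≤ t / k * t := by
        gcongr
        exact sum_le_sum fun i _ => by split_ifs <;> simp [h0]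
    _ = t ^ 2 / k := by ring

/-- For a symmetric PSD matrix `A = U Λ Uᵀ` with eigenvalues
`λ₁ ≥ … ≥ λₙ ≥ 0`, and `A_k` the best rank-`k` approximation obtained by keeping the top `k`
eigenvalues, one has `‖A − A_k‖_F ≤ tr(A) / √k`. -/
theorem frobenius_norm_sub_rank_k_approx_le_trace_div_sqrt
    (n k : ℕ) (hk : 1 ≤ k)
    (U : Matrix (Fin n) (Fin n) ℝ) (hU : Uᵀ * U = 1)
    (lam : Fin n → ℝ) (hnonneg : ∀ i, 0 ≤ lam i)
    (hmono : ∀ i j : Fin n, i ≤ j → lam j ≤ lam i)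
    (A Ak : Matrix (Fin n) (Fin n) ℝ)
    (hA : A = U * Matrix.diagonal lam * Uᵀ)
    (hAk : Ak = U * Matrix.diagonal (fun i : Fin n => if (i : ℕ) < k then lam i else 0) * Uᵀ) :
    Real.sqrt (∑ i, ∑ j, ((A - Ak) i j) ^ 2) ≤ A.trace / Real.sqrt k := by
  have hdiff :
      A - Ak = U * diagonal (fun i : Fin n => if (i : ℕ) < k then 0 else lam i) * Uᵀ := by
    rw [hA, hAk, ← sub_mul, ← Matrix.mul_sub, diagonal_sub]
    congr 3 with i
    split_ifs <;> simp
  have htr : A.trace = ∑ i, lam i := by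
    rw [hA, trace_mul_mul_transpose_of_transpose_mul_self hU, trace_diagonal]
  rw [hdiff, sum_sq_mul_mul_transpose_of_transpose_mul_self hU, sum_sq_diagonal, htr,
    ← Real.sqrt_sq (sum_nonneg fun i _ => hnonneg i), ← Real.sqrt_div' _ (Nat.cast_nonneg k)]
  exact Real.sqrt_le_sqrt (Antitone.sum_sq_tail_le_sq_sum_div hk hmono hnonneg)
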